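/- Suppose k is a field, λ ∈ k with λ ≠ 0, and X ≠ ∅. Then for any x ∈ X, the element 1 + λ•_x is group-like for Δ_λ (i.e. Δ_λ(1 + λ•_x) = (1 + λ•_x) ⊗ (1 + λ•_x) and ε(1 + λ•_x) = 1) but is not invertible in H(X,Ω); consequently the bialgebra (H(X,Ω), m, 1, Δ_λ, ε) admits no antipode, i.e. it is not a Hopf algebra. -/

import Mathlib

open scoped TensorProduct

universe u v w u'

/-- Decorated planar rooted trees: internal vertices are decorated by `Ω`,
leaves are decorated by `X ⊔ Ω` (a leaf decorated by `ω : Ω` is `node ω []`). -/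
inductive PTree (X : Type u) (Ω : Type v) : Type (max u v)
  | leafX : X → PTree X Ω
  | node : Ω → List (PTree X Ω) → PTree X Ω

namespace Moerdijk

variable {X : Type u} {Ω : Type v}

/-- `ℱ(X,Ω)`: decorated planar rooted forests, i.e. the free monoid on decorated
planar rooted trees under concatenation. -/
abbrev RForest (X : Type u) (Ω : Type v) := FreeMonoid (PTree X Ω)

/-- The single-vertex forest `•ₓ` for `x ∈ X`. -/
def leafF (x : X) : RForest X Ω := FreeMonoid.of (PTree.leafX x)

/-- Grafting of a forest onto a new common root decorated by `ω`. -/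
def graft (ω : Ω) (F : RForest X Ω) : RForest X Ω :=
  FreeMonoid.of (PTree.node ω (FreeMonoid.toList F))

variable (k : Type w) [CommRing k]

/-- `H(X,Ω)`: the free `k`-module on decorated planar rooted forests, a unital
associative algebra under the concatenation product. -/
abbrev RAlg (X : Type u) (Ω : Type v) := MonoidAlgebra k (RForest X Ω)

/-- The basis element of `H(X,Ω)` corresponding to a forest `F`. -/
noncomputable def ofF (F : RForest X Ω) : RAlg k X Ω := MonoidAlgebra.of k (RForest X Ω) F

/-- The grafting operator `B⁺_ω : H(X,Ω) → H(X,Ω)` as a linear map. -/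
noncomputable def Bplus (ω : Ω) : RAlg k X Ω →ₗ[k] RAlg k X Ω :=
  (MonoidAlgebra.coeffLinearEquiv k).symm.toLinearMap ∘ₗ Finsupp.lmapDomain k k (graft ω) ∘ₗ
    (MonoidAlgebra.coeffLinearEquiv k).toLinearMap

/-- The value of the coproduct `Δ_λ` on a decorated planar rooted tree:
`Δ_λ(•ₓ) = •ₓ ⊗ 1 + 1 ⊗ •ₓ + λ •ₓ ⊗ •ₓ` and
`Δ_λ(B⁺_ω(F)) = (B⁺_ω ⊗ id)Δ_λ(F) + (id ⊗ B⁺_ω)Δ_λ(F)`. -/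
noncomputable def DeltaT (lam : k) : PTree X Ω → (RAlg k X Ω ⊗[k] RAlg k X Ω)
  | .leafX x =>
      ofF k (leafF x) ⊗ₜ[k] 1 + 1 ⊗ₜ[k] ofF k (leafF x)
        + lam • (ofF k (leafF x) ⊗ₜ[k] ofF k (leafF x))
  | .node ω ts =>
      ((TensorProduct.map (Bplus k ω) LinearMap.id
        + TensorProduct.map LinearMap.id (Bplus k ω) :
          (RAlg k X Ω ⊗[k] RAlg k X Ω) →ₗ[k] (RAlg k X Ω ⊗[k] RAlg k X Ω)))
        ((ts.attach.map fun t => DeltaT lam t.1).prod)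
decreasing_by
  have := List.sizeOf_lt_of_mem t.2
  simp only [PTree.node.sizeOf_spec]
  omega

/-- The value of the coproduct `Δ_λ` on a forest: `Δ_λ(T₁⋯Tₘ) = Δ_λ(T₁)⋯Δ_λ(Tₘ)`. -/
noncomputable def DeltaF (lam : k) (F : RForest X Ω) : RAlg k X Ω ⊗[k] RAlg k X Ω :=
  ((FreeMonoid.toList F).map (DeltaT k lam)).prod

/-- The coproduct `Δ_λ : H(X,Ω) → H(X,Ω) ⊗ H(X,Ω)`. -/
noncomputable def Delta (lam : k) : RAlg k X Ω →ₗ[k] (RAlg k X Ω ⊗[k] RAlg k X Ω) :=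
  Finsupp.lsum k (fun F => LinearMap.toSpanSingleton k _ (DeltaF k lam F)) ∘ₗ
    (MonoidAlgebra.coeffLinearEquiv k).toLinearMap

/-- The counit `ε : H(X,Ω) → k`, sending the empty forest to `1` and every
nonempty forest to `0`. -/
noncomputable def eps : RAlg k X Ω →ₗ[k] k :=
  Finsupp.lsum k (fun F => LinearMap.toSpanSingleton k k
    (if (FreeMonoid.toList F).isEmpty then (1 : k) else 0)) ∘ₗ
    (MonoidAlgebra.coeffLinearEquiv k).toLinearMap

/- `g = 1 + λ•ₓ` is group-like: `Δ_λ(g) = 1 ⊗ 1 + λ(•ₓ ⊗ 1 + 1 ⊗ •ₓ + λ •ₓ ⊗ •ₓ) = g ⊗ g`,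
and `ε(g) = 1`. An antipode `S` would give `S(g) g = g S(g) = ε(g) = 1`, so `g` would be a unit.
But sending every tree to `X` defines an algebra map `H(X,Ω) → k[X]` taking `g` to `1 + λX`,
which is not a unit since `λ ≠ 0`. -/

open TensorProduct LinearMap in
theorem _root_.isUnit_of_grouplike_of_antipode {R A : Type*} [CommSemiring R] [Semiring A]
    [Algebra R A] {Δ : A →ₗ[R] A ⊗[R] A} {ε : A →ₗ[R] R} {S : A →ₗ[R] A}
    (hS_left : ∀ y, mul' R A (map S id (Δ y)) = ε y • 1)
    (hS_right : ∀ y, mul' R A (map id S (Δ y)) = ε y • 1)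
    {g : A} (hΔ : Δ g = g ⊗ₜ g) (hε : ε g = 1) : IsUnit g := by
  have h_left := hS_left g
  have h_right := hS_right g
  simp only [hΔ, hε, map_tmul, mul'_apply, id_coe, id_eq, one_smul] at h_left h_right
  exact ⟨⟨g, S g, h_right, h_left⟩, rfl⟩

open Polynomial in
theorem _root_.Polynomial.not_isUnit_one_add_smul_X {R : Type*} [CommRing R] [IsDomain R]
    {a : R} (ha : a ≠ 0) : ¬ IsUnit (1 + a • Polynomial.X : Polynomial R) := fun h => by
  have := natDegree_eq_zero_of_isUnit h
  rw [smul_eq_C_mul, natDegree_add_eq_right_of_natDegree_lt] at this <;> simp_all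

theorem _root_.FreeMonoid.not_isUnit_one_add_smul_of {R α : Type*} [CommRing R] [IsDomain R]
    {a : R} (ha : a ≠ 0) (t : α) :
    ¬ IsUnit (1 + a • MonoidAlgebra.of R (FreeMonoid α) (FreeMonoid.of t)) := fun h => by
  have h_poly := h.map
    (MonoidAlgebra.lift R (Polynomial R) (FreeMonoid α) (FreeMonoid.lift fun _ => Polynomial.X))
  simp only [map_add, map_one, map_smul, MonoidAlgebra.lift_of, FreeMonoid.lift_eval_of]
    at h_poly
  exact Polynomial.not_isUnit_one_add_smul_X ha h_poly

section
variable {k}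

@[simp]
theorem Delta_ofF (lam : k) (F : RForest X Ω) : Delta k lam (ofF k F) = DeltaF k lam F := by
  simp [Delta, ofF]

@[simp]
theorem eps_ofF (F : RForest X Ω) :
    eps k (ofF k F) = if (FreeMonoid.toList F).isEmpty then (1 : k) else 0 := by
  simp [eps, ofF]

theorem ofF_one : ofF k (1 : RForest X Ω) = 1 := rfl

theorem Delta_one (lam : k) : Delta k lam (1 : RAlg k X Ω) = 1 := by
  simp [← ofF_one, DeltaF]

theorem Delta_ofF_leafF (lam : k) (x : X) :
    Delta k lam (ofF k (leafF x) : RAlg k X Ω) =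
      ofF k (leafF x) ⊗ₜ[k] 1 + 1 ⊗ₜ[k] ofF k (leafF x)
        + lam • (ofF k (leafF x) ⊗ₜ[k] ofF k (leafF x)) := by
  simp [DeltaF, leafF, DeltaT]

open TensorProduct in
theorem Delta_one_add_smul_leafF (lam : k) (x : X) :
    Delta k lam (1 + lam • ofF k (leafF x) : RAlg k X Ω) =
      (1 + lam • ofF k (leafF x)) ⊗ₜ[k] (1 + lam • ofF k (leafF x)) := by
  rw [map_add, map_smul, Delta_one, Delta_ofF_leafF, Algebra.TensorProduct.one_def]
  simp only [tmul_add, add_tmul, smul_tmul', tmul_smul, smul_add, smul_smul]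
  module

theorem eps_one_add_smul_leafF (lam : k) (x : X) :
    eps k (1 + lam • ofF k (leafF x) : RAlg k X Ω) = 1 := by
  simp [← ofF_one, leafF]

theorem not_isUnit_one_add_smul_leafF [IsDomain k] {lam : k} (hlam : lam ≠ 0) (x : X) :
    ¬ IsUnit (1 + lam • ofF k (leafF x) : RAlg k X Ω) :=
  FreeMonoid.not_isUnit_one_add_smul_of hlam _

end

theorem not_hopf_general {k : Type w} [Field k] [Nonempty X]
    (lam : k) (hlam : lam ≠ 0) :
    (∀ x : X,
      Delta k lam (1 + lam • (ofF k (leafF x) : RAlg k X Ω))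
        = (1 + lam • (ofF k (leafF x) : RAlg k X Ω)) ⊗ₜ[k]
            (1 + lam • (ofF k (leafF x) : RAlg k X Ω)) ∧
      eps k (1 + lam • (ofF k (leafF x) : RAlg k X Ω)) = 1 ∧
      ¬ IsUnit (1 + lam • (ofF k (leafF x) : RAlg k X Ω))) ∧
    ¬ ∃ S : RAlg k X Ω →ₗ[k] RAlg k X Ω,
        (∀ y, LinearMap.mul' k (RAlg k X Ω)
            (TensorProduct.map S LinearMap.id (Delta k lam y)) = eps k y • 1) ∧
        (∀ y, LinearMap.mul' k (RAlg k X Ω)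
            (TensorProduct.map LinearMap.id S (Delta k lam y)) = eps k y • 1) := by
  refine ⟨fun x => ⟨Delta_one_add_smul_leafF lam x, eps_one_add_smul_leafF lam x,
    not_isUnit_one_add_smul_leafF hlam x⟩, ?_⟩
  rintro ⟨S, hS_left, hS_right⟩
  obtain ⟨x⟩ := ‹Nonempty X›
  exact not_isUnit_one_add_smul_leafF hlam x <| isUnit_of_grouplike_of_antipode hS_left hS_right
    (Delta_one_add_smul_leafF lam x) (eps_one_add_smul_leafF lam x)

/-- For `k` a field, `λ ≠ 0` and `X ≠ ∅`: the element `1 + λ•ₓ` is group-like for `Δ_λ`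
but not invertible, hence the bialgebra `(H(X,Ω), m, 1, Δ_λ, ε)` admits no antipode. -/
theorem not_hopf {k : Type w} [Field k] [Nonempty Ω] [Nonempty X]
    (lam : k) (hlam : lam ≠ 0) :
    (∀ x : X,
      Delta k lam (1 + lam • (ofF k (leafF x) : RAlg k X Ω))
        = (1 + lam • (ofF k (leafF x) : RAlg k X Ω)) ⊗ₜ[k]
            (1 + lam • (ofF k (leafF x) : RAlg k X Ω)) ∧
      eps k (1 + lam • (ofF k (leafF x) : RAlg k X Ω)) = 1 ∧
      ¬ IsUnit (1 + lam • (ofF k (leafF x) : RAlg k X Ω))) ∧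
    ¬ ∃ S : RAlg k X Ω →ₗ[k] RAlg k X Ω,
        (∀ y, LinearMap.mul' k (RAlg k X Ω)
            (TensorProduct.map S LinearMap.id (Delta k lam y)) = eps k y • 1) ∧
        (∀ y, LinearMap.mul' k (RAlg k X Ω)
            (TensorProduct.map LinearMap.id S (Delta k lam y)) = eps k y • 1) :=
  not_hopf_general lam hlam

end Moerdijk
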